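/- The function F(ν, α) = (1/(2n²)) Σ_{i,j} [(z_{ij}⁺ - (ν_i - ν_j + α))² + (z_{ij}⁻ - (ν_i - ν_j - α))²] has a critical point (all partial derivatives vanish) at any (ν, α) satisfying ν_k = (1/n)Σ_j ν_j + (1/n)Σ_j c_{kj} for all k and α = (1/(2n²)) Σ_{i,j} ℓ_{ij}, where c_{ij} = (z_{ij}⁺ + z_{ij}⁻)/2 and ℓ_{ij} = z_{ij}⁺ - z_{ij}⁻, assuming Z is reciprocal (z_{ij}⁺ = -z_{ji}⁻ and z_{ij}⁻ = -z_{ji}⁺). -/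

import Mathlib

open Finset in
/-- The least-squares objective of Model (M_{l₂}):
F(ν,α) = (1/(2n²)) Σ_{i,j} [(z_{ij}⁺ - (ν_i - ν_j + α))² + (z_{ij}⁻ - (ν_i - ν_j - α))²]. -/
noncomputable def Fobj (n : ℕ) (z : Fin n → Fin n → ℝ × ℝ) :
    ((Fin n → ℝ) × ℝ) → ℝ := fun p =>
  (1 / (2 * (n : ℝ) ^ 2)) * ∑ i : Fin n, ∑ j : Fin n,
    (((z i j).2 - (p.1 i - p.1 j + p.2)) ^ 2 +
     ((z i j).1 - (p.1 i - p.1 j - p.2)) ^ 2)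

/-!
The derivative of `Fobj` at `(ν, α)` in direction `(v, a)` is, up to the factor `-1/n²`,
`2 Σᵢⱼ wᵢⱼ (vᵢ - vⱼ) + a Σᵢⱼ (ℓᵢⱼ - 2α)` with `wᵢⱼ = cᵢⱼ - (νᵢ - νⱼ)`. The second sum vanishes
by the choice of `α`. Reciprocity makes `w` antisymmetric and the equation for `ν` says that its
row sums vanish, so its column sums vanish as well and the first sum is zero.
-/

open Finset

theorem sum_sum_mul_sub_eq_zero {ι R : Type*} [Fintype ι] [CommRing R] {w : ι → ι → R}
    (hanti : ∀ i j, w j i = -w i j) (hrow : ∀ i, ∑ j, w i j = 0) (v : ι → R) :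
    ∑ i, ∑ j, w i j * (v i - v j) = 0 := by
  have hcol : ∀ j, ∑ i, w i j = 0 := fun j => by
    rw [sum_congr rfl fun i _ => hanti j i, sum_neg_distrib, hrow, neg_zero]
  simp only [mul_sub, sum_sub_distrib]
  rw [sum_comm (f := fun i j => w i j * v j)]
  simp [← sum_mul, hrow, hcol]

theorem hasFDerivAt_sq_const_sub {E : Type*} [NormedAddCommGroup E] [NormedSpace ℝ E]
    (c : ℝ) (ℓ : E →L[ℝ] ℝ) (p : E) :
    HasFDerivAt (fun q => (c - ℓ q) ^ 2) (-(2 * (c - ℓ p)) • ℓ) p := by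
  refine ((ℓ.hasFDerivAt.const_sub c).pow 2).congr_fderiv ?_
  ext; simp

theorem fderiv_Fobj_apply (n : ℕ) (z : Fin n → Fin n → ℝ × ℝ) (p x : (Fin n → ℝ) × ℝ) :
    fderiv ℝ (Fobj n z) p x = -(1 / (n : ℝ) ^ 2) * ∑ i : Fin n, ∑ j : Fin n,
      (((z i j).2 - (p.1 i - p.1 j + p.2)) * (x.1 i - x.1 j + x.2) +
       ((z i j).1 - (p.1 i - p.1 j - p.2)) * (x.1 i - x.1 j - x.2)) := by
  let π : Fin n → (Fin n → ℝ) →L[ℝ] ℝ := fun i => ContinuousLinearMap.proj i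
  let d : Fin n → Fin n → ((Fin n → ℝ) × ℝ) →L[ℝ] ℝ := fun i j =>
    (π i - π j) ∘L ContinuousLinearMap.fst ℝ _ _
  let a : ((Fin n → ℝ) × ℝ) →L[ℝ] ℝ := ContinuousLinearMap.snd ℝ _ _
  have hF := (HasFDerivAt.fun_sum fun i (_ : i ∈ univ) => HasFDerivAt.fun_sum fun j (_ : j ∈ univ) =>
      (hasFDerivAt_sq_const_sub (z i j).2 (d i j + a) p).fun_add
        (hasFDerivAt_sq_const_sub (z i j).1 (d i j - a) p)).const_mul (1 / (2 * (n : ℝ) ^ 2))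
  rw [(show HasFDerivAt (Fobj n z) _ p from hF).fderiv]
  simp only [one_div, mul_inv_rev, ContinuousLinearMap.sub_comp, add_apply, sub_apply,
    ContinuousLinearMap.comp_apply, ContinuousLinearMap.coe_fst', ContinuousLinearMap.proj_apply,
    ContinuousLinearMap.coe_snd', smul_add, neg_smul, smul_apply, _root_.sum_apply, neg_apply,
    smul_eq_mul, neg_mul, mul_sum, d, π, a]
  exact sum_congr rfl fun i _ => sum_congr rfl fun j _ => by ring

theorem critical_point_Fobj_general (n : ℕ) (hn : 0 < n) (z : Fin n → Fin n → ℝ × ℝ)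
    (hrec : ∀ i j, (z i j).2 = -(z j i).1 ∧ (z i j).1 = -(z j i).2)
    (ν : Fin n → ℝ) (α : ℝ)
    (hν : ∀ k, ν k = (1 / (n : ℝ)) * (∑ j : Fin n, ν j) +
      (1 / (n : ℝ)) * ∑ j : Fin n, ((z k j).2 + (z k j).1) / 2)
    (hα : α = (1 / (2 * (n : ℝ) ^ 2)) * ∑ i : Fin n, ∑ j : Fin n,
      ((z i j).2 - (z i j).1)) :
    fderiv ℝ (Fobj n z) (ν, α) = 0 := by
  have hn₀ : (n : ℝ) ≠ 0 := by positivity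
  let w : Fin n → Fin n → ℝ := fun i j => ((z i j).2 + (z i j).1) / 2 - (ν i - ν j)
  have hw_anti : ∀ i j, w j i = -w i j := fun i j => by
    simp only [w, (hrec i j).1, (hrec i j).2]; ring
  have hw_row : ∀ i, ∑ j, w i j = 0 := fun i => by
    have := hν i
    simp only [w, sum_sub_distrib, sum_const, card_univ, Fintype.card_fin, nsmul_eq_mul] at this ⊢
    field_simp at this ⊢
    linarith
  have hℓ : ∑ i : Fin n, ∑ j : Fin n, ((z i j).2 - (z i j).1 - 2 * α) = 0 := by
    simp only [sum_sub_distrib, sum_const, card_univ, Fintype.card_fin, nsmul_eq_mul, hα]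
    field_simp
    ring
  refine ContinuousLinearMap.ext fun x => ?_
  calc fderiv ℝ (Fobj n z) (ν, α) x
      = -(1 / (n : ℝ) ^ 2) * (2 * ∑ i, ∑ j, w i j * (x.1 i - x.1 j)
          + x.2 * ∑ i : Fin n, ∑ j : Fin n, ((z i j).2 - (z i j).1 - 2 * α)) := by
        simp only [fderiv_Fobj_apply, mul_sum, ← sum_add_distrib]
        exact sum_congr rfl fun i _ => sum_congr rfl fun j _ => by simp only [w]; ring
    _ = 0 := by rw [sum_sum_mul_sub_eq_zero hw_anti hw_row, hℓ]; simp

open Finset in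
/-- F has a critical point (vanishing derivative) at any (ν,α) with
ν_k = (1/n)Σ_j ν_j + (1/n)Σ_j c_{kj} and α = (1/(2n²)) Σ_{i,j} ℓ_{ij},
for a reciprocal interval matrix Z. -/
theorem critical_point_Fobj (n : ℕ) (hn : 0 < n) (z : Fin n → Fin n → ℝ × ℝ)
    (hvalid : ∀ i j, (z i j).1 ≤ (z i j).2)
    (hrec : ∀ i j, (z i j).2 = -(z j i).1 ∧ (z i j).1 = -(z j i).2)
    (ν : Fin n → ℝ) (α : ℝ)
    (hν : ∀ k, ν k = (1 / (n : ℝ)) * (∑ j : Fin n, ν j) +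
      (1 / (n : ℝ)) * ∑ j : Fin n, ((z k j).2 + (z k j).1) / 2)
    (hα : α = (1 / (2 * (n : ℝ) ^ 2)) * ∑ i : Fin n, ∑ j : Fin n,
      ((z i j).2 - (z i j).1)) :
    fderiv ℝ (Fobj n z) (ν, α) = 0 :=
  critical_point_Fobj_general n hn z hrec ν α hν hα
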